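/- With notation as in the previous statement (A equals identity except in rows k ≠ m), if x is a vector with x_i ≠ -∞ for some i ∈ L₁ ∪ L₂ ∪ {k,m} and a_{km} + a_{mk} > 0, then A ⊗ x ≤ x is impossible; in particular any solution x of A ⊗ x ≤ x with some x_i ≠ -∞, i ∈ L₁ ∪ L₂ ∪ {k,m}, must satisfy both x_k ≠ -∞ and x_m ≠ -∞, leading to the contradiction x_k ≥ a_{km} + a_{mk} + x_k > x_k. -/

import Mathlib

open Finset

/-- The max-plus semiring carrier: ℝ ∪ {-∞}. Addition of the semiring is `⊔` (max),
multiplication is `+` (with `⊥ + x = ⊥`), zero is `⊥`, unit is `0`. -/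
abbrev MP := WithBot ℝ

/-- Max-plus matrix-vector product: `(A ⊗ x) i = max_j (A i j + x j)`. -/
def mvMul {n : ℕ} (A : Matrix (Fin n) (Fin n) MP) (x : Fin n → MP) : Fin n → MP :=
  fun i => univ.sup fun j => A i j + x j

/-- Max-plus matrix-matrix product. -/
def mmMul {n : ℕ} (A B : Matrix (Fin n) (Fin n) MP) : Matrix (Fin n) (Fin n) MP :=
  fun i j => univ.sup fun k => A i k + B k j

/-- Max-plus identity matrix: `0` on the diagonal, `⊥ = -∞` elsewhere. -/
def mpI {n : ℕ} : Matrix (Fin n) (Fin n) MP := fun i j => if i = j then 0 else ⊥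

/-- Max-plus matrix powers. -/
def mpPow {n : ℕ} (A : Matrix (Fin n) (Fin n) MP) : ℕ → Matrix (Fin n) (Fin n) MP
  | 0 => mpI
  | m + 1 => mmMul A (mpPow A m)

/-- The `i`-th multiorder relation: `x ≤_i y` iff `x_i ≠ -∞`, `y_i ≠ -∞` and
`x_j - x_i ≤ y_j - y_i` for all `j` (stated multiplicatively to avoid subtraction). -/
def leI {n : ℕ} (i : Fin n) (x y : Fin n → MP) : Prop :=
  x i ≠ ⊥ ∧ y i ≠ ⊥ ∧ ∀ j, x j + y i ≤ y j + x i

/-- The max-plus cone generated by a finite set `S` of vectors: all max-plus linear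
combinations `⊕_{z ∈ S} α_z ⊗ z`. -/
def genBy {n : ℕ} (S : Finset (Fin n → MP)) : Set (Fin n → MP) :=
  {x | ∃ α : (Fin n → MP) → MP, ∀ j, x j = S.sup fun z => α z + z j}

/-- A finite set of vectors is (max-plus) independent if no element is a max-plus
combination of the others. -/
def mpIndep {n : ℕ} (S : Finset (Fin n → MP)) : Prop :=
  ∀ s ∈ S, s ∉ genBy (S.erase s)

/-! A finite entry `x_k` of a sub-eigenvector `A ⊗ x ≤ x` propagates backwards along the finite
entries of `A`, so `x_k` and `x_m` are both finite. Then `a_km + a_mk + x_k ≤ a_km + x_m ≤ x_k`,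
and cancelling the finite `x_k` leaves `a_km + a_mk ≤ 0`. -/

section SubEigenvector

variable {n : ℕ} {A : Matrix (Fin n) (Fin n) MP} {x : Fin n → MP}

theorem mvMul_le_iff {i : Fin n} {c : MP} : mvMul A x i ≤ c ↔ ∀ j, A i j + x j ≤ c :=
  Finset.sup_le_iff.trans <| by simp only [Finset.mem_univ, true_implies]

theorem ne_bot_of_mvMul_le (hx : ∀ i, mvMul A x i ≤ x i) {i j : Fin n}
    (hA : A i j ≠ ⊥) (hxj : x j ≠ ⊥) : x i ≠ ⊥ :=
  ne_bot_of_le_ne_bot (WithBot.add_ne_bot.mpr ⟨hA, hxj⟩) (mvMul_le_iff.mp (hx i) j)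

theorem cycle_weight_nonpos_of_mvMul_le (hx : ∀ i, mvMul A x i ≤ x i) {k m : Fin n}
    (hxk : x k ≠ ⊥) : A k m + A m k ≤ 0 := by
  have hcycle : A k m + A m k + x k ≤ 0 + x k := calc
    A k m + A m k + x k = A k m + (A m k + x k) := add_assoc _ _ _
    _ ≤ A k m + x m := by gcongr; exact mvMul_le_iff.mp (hx m) k
    _ ≤ x k := mvMul_le_iff.mp (hx k) m
    _ = 0 + x k := (zero_add _).symm
  exact (WithBot.add_le_add_iff_right hxk).mp hcycle

end SubEigenvector

theorem maxplus_two_modified_rows_positive_cycle_no_solution_general {n : ℕ}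
    (A : Matrix (Fin n) (Fin n) MP) (k m : Fin n)
    (hcyc : 0 < A k m + A m k)
    (x : Fin n → MP)
    (hx : ∃ i, ((i ≠ k ∧ A k i ≠ ⊥) ∨ (i ≠ m ∧ A m i ≠ ⊥) ∨ i = k ∨ i = m) ∧ x i ≠ ⊥) :
    ¬ (∀ i, mvMul A x i ≤ x i) := by
  intro hsub
  obtain ⟨hAkm, hAmk⟩ := WithBot.add_ne_bot.mp hcyc.ne_bot
  obtain ⟨i, hi, hxi⟩ := hx
  have hxk_of_hxm : x m ≠ ⊥ → x k ≠ ⊥ := ne_bot_of_mvMul_le hsub hAkm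
  have hxk : x k ≠ ⊥ := by
    rcases hi with ⟨-, hAki⟩ | ⟨-, hAmi⟩ | rfl | rfl
    · exact ne_bot_of_mvMul_le hsub hAki hxi
    · exact hxk_of_hxm (ne_bot_of_mvMul_le hsub hAmi hxi)
    · exact hxi
    · exact hxk_of_hxm hxi
  exact (cycle_weight_nonpos_of_mvMul_le hsub hxk).not_gt hcyc

/-- With `A` equal to the identity except in rows `k ≠ m` and the two-cycle `k → m → k` of
positive weight, a vector `x` which is non-`-∞` at some index of `L₁ ∪ L₂ ∪ {k, m}` cannot
satisfy `A ⊗ x ≤ x`. -/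
theorem maxplus_two_modified_rows_positive_cycle_no_solution {n : ℕ}
    (A : Matrix (Fin n) (Fin n) MP) (k m : Fin n) (hkm : k ≠ m)
    (hkk : A k k = 0) (hmm : A m m = 0)
    (hrow : ∀ i, i ≠ k → i ≠ m → ∀ j, A i j = mpI i j)
    (hcyc : 0 < A k m + A m k)
    (x : Fin n → MP)
    (hx : ∃ i, ((i ≠ k ∧ A k i ≠ ⊥) ∨ (i ≠ m ∧ A m i ≠ ⊥) ∨ i = k ∨ i = m) ∧ x i ≠ ⊥) :
    ¬ (∀ i, mvMul A x i ≤ x i) :=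
  maxplus_two_modified_rows_positive_cycle_no_solution_general A k m hcyc x hx
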